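/- arXiv:1711.04645 — 2 statements merged into one kernel-verified Lean document; each statement's English description precedes it below -/
import Mathlib

section
/- Let Ω be a measurable space, let S be a Souslin space (a metrizable topological space that is the image of a Polish space under a continuous map), and let X be a countably C-separated T1 topological space. Let {F_s}_{s∈S} be a family of compact-valued multifunctions F_s : Ω → X such that the multifunction (ω, s) ↦ F_s(ω) on Ω × S (with the product σ-algebra of the σ-algebra on Ω and the Borel σ-algebra of S) is closed-measurable. Then the multifunction ω ↦ ⋂_{s∈S} F_s(ω) is universally closed-measurable. -/
/-!
The complement of `{ω | (⋂ s, F s ω) ∩ C ≠ ∅}` is the projection to `Ω` of the set of pairs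
`(ω, t) ∈ Ω × ℕ^ℕ` such that `t` codes a sequence `(s n)` in `S` with `(⋂ n, F (s n) ω) ∩ C = ∅`.
Countable C-separation lets a countable subfamily of the compact sets `F s ω` have the same
intersection, and, by compactness of `F (s 0) ω ∩ C`, the emptiness of `(⋂ n, F (s n) ω) ∩ C` is
a countable union of finite intersections of closed-measurable conditions; so the set of pairs is
measurable. A measurable subset of `Ω × ℕ^ℕ` is the pullback of a Borel set under
`φ × id` for some measurable `φ : Ω → ℕ^ℕ`, so its projection is the `φ`-preimage of an analytic
set. Analytic sets are null measurable for every finite measure: if `f : ℕ^ℕ → Y` is continuous,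
then for every `c < ν (range f)` greedily choosing coordinate bounds `m` keeps
`ν (f '' {t | ∀ i < k, t i ≤ m i}) > c` for every `k`, and the compact set `f '' {t | t ≤ m}` then
has measure at least `c`.
-/

open MeasureTheory Set Filter Topology Function
open scoped ENNReal

section AnalyticSet

variable {Y : Type*}

theorem exists_lt_measure_image_inter_le {α : Type*} [MeasurableSpace Y] (ν : Measure Y)
    (f : α → Y) (g : α → ℕ) {B : Set α} {c : ℝ≥0∞} (hc : c < ν (f '' B)) :
    ∃ j, c < ν (f '' (B ∩ {a | g a ≤ j})) := by
  have hunion : f '' B = ⋃ j, f '' (B ∩ {a | g a ≤ j}) := by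
    rw [← image_iUnion, ← inter_iUnion, iUnion_eq_univ_iff.2 fun a => ⟨g a, le_refl (g a)⟩,
      inter_univ]
  have hmono : Monotone fun j => f '' (B ∩ {a | g a ≤ j}) := fun j j' hj =>
    image_mono (inter_subset_inter_right _ fun a ha => le_trans ha hj)
  -- continuity from below holds for arbitrary, not necessarily measurable, sets
  rwa [hunion, hmono.measure_iUnion, lt_iSup_iff] at hc

theorem exists_forall_lt_measure_image_pi_le [MeasurableSpace Y] (ν : Measure Y)
    (f : (ℕ → ℕ) → Y) {c : ℝ≥0∞} (hc : c < ν (range f)) :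
    ∃ m : ℕ → ℕ, ∀ k, c < ν (f '' {t | ∀ i < k, t i ≤ m i}) := by
  let Large := {B : Set (ℕ → ℕ) // c < ν (f '' B)}
  choose J hJ using fun (B : Large) (k : ℕ) => exists_lt_measure_image_inter_le ν f (· k) B.2
  let B : ℕ → Large := fun k =>
    Nat.rec ⟨univ, by rwa [image_univ]⟩ (fun k Bk => ⟨_, hJ Bk k⟩) k
  have hB : ∀ k, (B k).1 = {t | ∀ i < k, t i ≤ J (B i) i} := by
    intro k
    induction k with
    | zero => simp [B]
    | succ k ih =>
      change (B k).1 ∩ _ = _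
      ext t
      simp only [ih, mem_inter_iff, mem_ofPred_eq, Nat.lt_succ_iff_lt_or_eq, or_imp, forall_and,
        forall_eq]
      rfl
  exact ⟨fun i => J (B i) i, fun k => hB k ▸ (B k).2⟩

theorem isCompact_pi_le (m : ℕ → ℕ) : IsCompact {t : ℕ → ℕ | ∀ i, t i ≤ m i} := by
  simpa [Set.pi, ← Iic_def] using isCompact_univ_pi fun i => (finite_Iic (m i)).isCompact

theorem iInter_closure_image_subset_image_pi_le [TopologicalSpace Y] [T2Space Y]
    [FirstCountableTopology Y] {f : (ℕ → ℕ) → Y} (hf : Continuous f) (m : ℕ → ℕ) :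
    ⋂ k, closure (f '' {t | ∀ i < k, t i ≤ m i}) ⊆ f '' {t | ∀ i, t i ≤ m i} := by
  intro y hy
  obtain ⟨V, hV⟩ := (𝓝 y).exists_antitone_basis
  have hmem : ∀ k, ∃ t, (∀ i < k, t i ≤ m i) ∧ f t ∈ V k := fun k => by
    obtain ⟨_, hyV, t, ht, rfl⟩ := mem_closure_iff_nhds.1 (mem_iInter.1 hy k) (V k) (hV.mem k)
    exact ⟨t, ht, hyV⟩
  choose u hu hfu using hmem
  obtain ⟨b, hb, φ, hφ, hlim⟩ := (isCompact_pi_le m).tendsto_subseq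
    (x := fun k i => min (u k i) (m i)) fun k i => min_le_right _ _
  -- `u k` agrees with its truncation at `m` in the first `k` coordinates
  have hu_lim : Tendsto (u ∘ φ) atTop (𝓝 b) := by
    refine tendsto_pi_nhds.2 fun i => (tendsto_pi_nhds.1 hlim i).congr' ?_
    filter_upwards [eventually_gt_atTop i] with k hk
    exact min_eq_left (hu _ i (hk.trans_le hφ.le_apply))
  exact ⟨b, hb, tendsto_nhds_unique ((hf.tendsto b).comp hu_lim)
    ((hV.tendsto hfu).comp hφ.tendsto_atTop)⟩

theorem exists_isCompact_subset_range_le_measure [TopologicalSpace Y] [T2Space Y]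
    [FirstCountableTopology Y] [MeasurableSpace Y] [OpensMeasurableSpace Y] (ν : Measure Y)
    [IsFiniteMeasure ν] {f : (ℕ → ℕ) → Y} (hf : Continuous f) {c : ℝ≥0∞}
    (hc : c < ν (range f)) : ∃ K, IsCompact K ∧ K ⊆ range f ∧ c ≤ ν K := by
  obtain ⟨m, hm⟩ := exists_forall_lt_measure_image_pi_le ν f hc
  have hanti : Antitone fun k => closure (f '' {t | ∀ i < k, t i ≤ m i}) := fun k k' hk =>
    closure_mono (image_mono fun t ht i hi => ht i (hi.trans_le hk))
  refine ⟨_, (isCompact_pi_le m).image hf, image_subset_range _ _, ?_⟩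
  calc c ≤ ⨅ k, ν (closure (f '' {t | ∀ i < k, t i ≤ m i})) :=
        le_iInf fun k => (hm k).le.trans (measure_mono subset_closure)
    _ = ν (⋂ k, closure (f '' {t | ∀ i < k, t i ≤ m i})) :=
        (hanti.measure_iInter (fun _ => isClosed_closure.nullMeasurableSet)
          ⟨0, measure_ne_top _ _⟩).symm
    _ ≤ ν (f '' {t | ∀ i, t i ≤ m i}) :=
        measure_mono (iInter_closure_image_subset_image_pi_le hf m)

theorem nullMeasurableSet_of_forall_lt_exists_subset_le_measure [MeasurableSpace Y]
    {ν : Measure Y} [IsFiniteMeasure ν] {A : Set Y}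
    (h : ∀ c < ν A, ∃ D ⊆ A, MeasurableSet D ∧ c ≤ ν D) : NullMeasurableSet A ν := by
  rcases eq_zero_or_pos (ν A) with hA | hA
  · exact .of_null hA
  obtain ⟨c, -, hc, hlim⟩ := exists_seq_strictMono_tendsto' hA
  choose D hDA hD hcD using fun n => h (c n) (hc n).2
  have hle : ν A ≤ ν (⋃ n, D n) :=
    le_of_tendsto' hlim fun n => (hcD n).trans (measure_mono (subset_iUnion D n))
  exact (MeasurableSet.iUnion hD).nullMeasurableSet.congr
    (ae_eq_of_subset_of_measure_ge (iUnion_subset hDA) hle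
      (MeasurableSet.iUnion hD).nullMeasurableSet (measure_ne_top _ _))

theorem MeasureTheory.AnalyticSet.nullMeasurableSet [TopologicalSpace Y] [T2Space Y]
    [FirstCountableTopology Y] [MeasurableSpace Y] [OpensMeasurableSpace Y] {A : Set Y}
    (hA : AnalyticSet A) (ν : Measure Y) [IsFiniteMeasure ν] : NullMeasurableSet A ν := by
  rw [AnalyticSet] at hA
  rcases hA with rfl | ⟨f, hf, rfl⟩
  · exact nullMeasurableSet_empty
  refine nullMeasurableSet_of_forall_lt_exists_subset_le_measure fun c hc => ?_
  obtain ⟨K, hK, hKA, hcK⟩ := exists_isCompact_subset_range_le_measure ν hf hc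
  exact ⟨K, hKA, hK.isClosed.measurableSet, hcK⟩

end AnalyticSet

section Projection

variable {Ω β : Type*} [MeasurableSpace Ω] [MeasurableSpace β]

theorem MeasurableSet.exists_eq_prodMap_id_preimage {A : Set (Ω × β)} (hA : MeasurableSet A) :
    ∃ φ : Ω → ℕ → ℕ, Measurable φ ∧
      ∃ A' : Set ((ℕ → ℕ) × β), MeasurableSet A' ∧ A = Prod.map φ id ⁻¹' A' := by
  induction A, hA using MeasurableSpace.induction_on_inter generateFrom_prod.symm isPiSystem_prod
    with
  | empty => exact ⟨fun _ _ => 0, measurable_const, ∅, .empty, rfl⟩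
  | basic _ hA =>
    obtain ⟨s, hs, t, ht, rfl⟩ := hA
    classical
    refine ⟨fun ω _ => if ω ∈ s then 1 else 0,
      measurable_pi_lambda _ fun _ => measurable_const.ite hs measurable_const,
      {x | x 0 = 1} ×ˢ t, (measurableSet_eq_fun (measurable_pi_apply 0) measurable_const).prod ht,
      ?_⟩
    ext ⟨ω, b⟩
    by_cases hω : ω ∈ s <;> simp [hω]
  | compl _ _ ih =>
    obtain ⟨φ, hφ, A', hA', rfl⟩ := ih
    exact ⟨φ, hφ, A'ᶜ, hA'.compl, rfl⟩
  | iUnion A _ _ ih =>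
    choose φ hφ A' hA' hAeq using ih
    -- interleave the countably many codes `φ n` into a single one via `Nat.pair`
    let Φ : Ω → ℕ → ℕ := fun ω k => φ (Nat.unpair k).1 ω (Nat.unpair k).2
    let proj : ℕ → (ℕ → ℕ) → ℕ → ℕ := fun n x k => x (Nat.pair n k)
    have hproj : ∀ n, Measurable (proj n) := fun n => measurable_pi_lambda _ fun _ =>
      measurable_pi_apply _
    refine ⟨Φ, measurable_pi_lambda _ fun k => (measurable_pi_apply _).comp (hφ _),
      ⋃ n, Prod.map (proj n) id ⁻¹' A' n,
      .iUnion fun n => ((hproj n).prodMap measurable_id) (hA' n), ?_⟩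
    have hdecode : ∀ n, proj n ∘ Φ = φ n := fun n => by funext ω k; simp [Φ, proj]
    simp only [preimage_iUnion, hAeq, ← preimage_comp, Prod.map_comp_map, hdecode,
      Function.id_comp]

theorem MeasurableSet.nullMeasurableSet_image_fst [TopologicalSpace β] [PolishSpace β]
    [BorelSpace β] {A : Set (Ω × β)} (hA : MeasurableSet A) (μ : Measure Ω)
    [IsFiniteMeasure μ] : NullMeasurableSet (Prod.fst '' A) μ := by
  obtain ⟨φ, hφ, A', hA', rfl⟩ := hA.exists_eq_prodMap_id_preimage
  have himage : Prod.fst '' (Prod.map φ id ⁻¹' A') = φ ⁻¹' (Prod.fst '' A') := by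
    ext; simp [Prod.map]
  rw [himage]
  exact ((hA'.analyticSet.image_of_continuous continuous_fst).nullMeasurableSet _).preimage
    (hφ.quasiMeasurePreserving μ)

end Projection

section CSeparating

variable {X : Type*} [TopologicalSpace X]

def IsClosedMeasurable {α : Type*} [MeasurableSpace α] (Φ : α → Set X) : Prop :=
  ∀ C, IsClosed C → MeasurableSet {a | (Φ a ∩ C).Nonempty}

def IsCSeparating (𝒰 : Set (Set X)) : Prop :=
  (∀ U ∈ 𝒰, IsOpen U) ∧ ∀ K C : Set X, IsCompact K → IsClosed C → Disjoint K C →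
    ∃ U ∈ 𝒰, C ⊆ U ∧ U ∩ K = ∅

namespace IsCSeparating

variable {𝒰 : Set (Set X)}

theorem exists_mem_disjoint_of_notMem [T1Space X] (h : IsCSeparating 𝒰) {K : Set X}
    (hK : IsCompact K) {x : X} (hx : x ∉ K) : ∃ U ∈ 𝒰, x ∈ U ∧ Disjoint U K := by
  obtain ⟨U, hU, hxU, hUK⟩ :=
    h.2 K {x} hK isClosed_singleton (disjoint_singleton_right.2 hx)
  exact ⟨U, hU, singleton_subset_iff.1 hxU, disjoint_iff_inter_eq_empty.2 hUK⟩

theorem nonempty_inter_iff_of_isOpen (h : IsCSeparating 𝒰) {K U : Set X} (hU : IsOpen U) :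
    (K ∩ U).Nonempty ↔ ∃ V ∈ 𝒰, Uᶜ ⊆ V ∧ (K ∩ Vᶜ).Nonempty := by
  constructor
  · rintro ⟨x, hxK, hxU⟩
    obtain ⟨V, hV, hUV, hVx⟩ := h.2 {x} Uᶜ isCompact_singleton hU.isClosed_compl
      (disjoint_singleton_left.2 (not_not.2 hxU))
    exact ⟨V, hV, hUV, x, hxK, fun hxV => hVx.subset ⟨hxV, rfl⟩⟩
  · rintro ⟨V, -, hUV, x, hxK, hxV⟩
    exact ⟨x, hxK, not_not.1 fun hxU => hxV (hUV hxU)⟩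

theorem measurableSet_nonempty_inter_of_isOpen (h : IsCSeparating 𝒰) (h𝒰 : 𝒰.Countable)
    {α : Type*} [MeasurableSpace α] {Φ : α → Set X} (hΦ : IsClosedMeasurable Φ) {U : Set X}
    (hU : IsOpen U) : MeasurableSet {a | (Φ a ∩ U).Nonempty} := by
  have hunion : {a | (Φ a ∩ U).Nonempty} =
      ⋃ V ∈ {V ∈ 𝒰 | Uᶜ ⊆ V}, {a | (Φ a ∩ Vᶜ).Nonempty} := by
    ext a
    simp [h.nonempty_inter_iff_of_isOpen hU, and_assoc]
  rw [hunion]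
  exact .biUnion (h𝒰.mono (sep_subset _ _)) fun V hV => hΦ _ (h.1 V hV.1).isClosed_compl

theorem exists_seq_iInter_subset [T1Space X] (h : IsCSeparating 𝒰) (h𝒰 : 𝒰.Countable)
    {ι : Type*} [Nonempty ι] {K : ι → Set X} (hK : ∀ i, IsCompact (K i)) :
    ∃ σ : ℕ → ι, ⋂ n, K (σ n) ⊆ ⋂ i, K i := by
  have := h𝒰.to_subtype
  have hmiss : ∀ U : 𝒰, ∃ i, (∃ j, Disjoint (U : Set X) (K j)) → Disjoint (U : Set X) (K i) :=
    fun U => by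
      by_cases hU : ∃ j, Disjoint (U : Set X) (K j)
      · exact hU.imp fun j hj _ => hj
      · exact ⟨Classical.arbitrary ι, fun h => (hU h).elim⟩
  choose τ hτ using hmiss
  obtain ⟨e, he⟩ := exists_surjective_nat (Option 𝒰)
  refine ⟨fun n => (e n).elim (Classical.arbitrary ι) τ, fun x hx => mem_iInter.2 fun i => ?_⟩
  by_contra hxi
  obtain ⟨U, hU, hxU, hUK⟩ := h.exists_mem_disjoint_of_notMem (hK i) hxi
  obtain ⟨n, hn⟩ := he (some ⟨U, hU⟩)
  have hxτ : x ∈ K (τ ⟨U, hU⟩) := by simpa [hn] using mem_iInter.1 hx n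
  exact (hτ ⟨U, hU⟩ ⟨i, hUK⟩).notMem_of_mem_left hxU hxτ

theorem iInter_inter_eq_empty_iff_exists_seq [T1Space X] (h : IsCSeparating 𝒰)
    (h𝒰 : 𝒰.Countable) {ι : Type*} [Nonempty ι] {K : ι → Set X} (hK : ∀ i, IsCompact (K i))
    {C : Set X} : (⋂ i, K i) ∩ C = ∅ ↔ ∃ σ : ℕ → ι, (⋂ n, K (σ n)) ∩ C = ∅ := by
  obtain ⟨σ, hσ⟩ := h.exists_seq_iInter_subset h𝒰 hK
  exact ⟨fun hKC => ⟨σ, subset_eq_empty (inter_subset_inter_left C hσ) hKC⟩,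
    fun ⟨τ, hτ⟩ => subset_eq_empty (inter_subset_inter_left C
      (subset_iInter fun n => iInter_subset K (τ n))) hτ⟩

theorem iInter_inter_eq_empty_iff [T1Space X] (h : IsCSeparating 𝒰) {K : ℕ → Set X}
    (hK : ∀ n, IsCompact (K n)) {C : Set X} (hC : IsClosed C) :
    (⋂ n, K n) ∩ C = ∅ ↔ ∃ s : Finset (𝒰 × ℕ),
      Disjoint (K 0) (C \ ⋃ p ∈ s, (p.1 : Set X)) ∧ ∀ p ∈ s, Disjoint (K p.2) p.1 := by
  constructor
  · intro hKC
    have hcover : K 0 ∩ C ⊆ ⋃ p ∈ {p : 𝒰 × ℕ | Disjoint (K p.2) p.1}, (p.1 : Set X) := by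
      intro x ⟨hx0, hxC⟩
      obtain ⟨n, hxn⟩ : ∃ n, x ∉ K n := by
        by_contra! hx
        exact hKC.subset ⟨mem_iInter.2 hx, hxC⟩
      obtain ⟨U, hU, hxU, hUK⟩ := h.exists_mem_disjoint_of_notMem (hK n) hxn
      exact mem_iUnion₂.2 ⟨(⟨U, hU⟩, n), hUK.symm, hxU⟩
    obtain ⟨t, hts, htfin, hcover⟩ := ((hK 0).inter_right hC).elim_finite_subcover_image
      (fun p _ => h.1 _ p.1.2) hcover
    refine ⟨htfin.toFinset, disjoint_left.2 fun x hx0 ⟨hxC, hxU⟩ => hxU ?_,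
      fun p hp => hts (htfin.mem_toFinset.1 hp)⟩
    simpa using hcover ⟨hx0, hxC⟩
  · rintro ⟨s, hs0, hs⟩
    refine eq_empty_of_forall_notMem fun x ⟨hx, hxC⟩ => ?_
    rw [mem_iInter] at hx
    by_cases hxs : x ∈ ⋃ p ∈ s, (p.1 : Set X)
    · obtain ⟨p, hp, hxp⟩ := mem_iUnion₂.1 hxs
      exact (hs p hp).notMem_of_mem_left (hx p.2) hxp
    · exact hs0.notMem_of_mem_left (hx 0) ⟨hxC, hxs⟩

theorem measurableSet_iInter_inter_eq_empty [T1Space X] (h : IsCSeparating 𝒰)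
    (h𝒰 : 𝒰.Countable) {α : Type*} [MeasurableSpace α] {Φ : ℕ → α → Set X}
    (hΦ : ∀ n, IsClosedMeasurable (Φ n)) (hΦc : ∀ n a, IsCompact (Φ n a)) {C : Set X}
    (hC : IsClosed C) : MeasurableSet {a | (⋂ n, Φ n a) ∩ C = ∅} := by
  have := h𝒰.to_subtype
  have hdisj : ∀ n {D : Set X}, MeasurableSet {a | (Φ n a ∩ D).Nonempty} →
      MeasurableSet {a | Disjoint (Φ n a) D} := fun n D hD => by
    convert hD.compl using 1
    ext
    simp [not_nonempty_iff_eq_empty, disjoint_iff_inter_eq_empty]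
  simp_rw [h.iInter_inter_eq_empty_iff (fun n => hΦc n _) hC, ofPred_exists, ofPred_and,
    ofPred_forall]
  refine .iUnion fun s => .inter (hdisj 0 (hΦ 0 _ (hC.sdiff ?_))) (.biInter s.countable_toSet
    fun p _ => hdisj p.2 (h.measurableSet_nonempty_inter_of_isOpen h𝒰 (hΦ p.2) (h.1 _ p.1.2)))
  exact isOpen_biUnion fun p _ => h.1 _ p.1.2

end IsCSeparating

end CSeparating

theorem exists_continuous_surjective_nat_nat_seq {S : Type*} [TopologicalSpace S]
    {h : (ℕ → ℕ) → S} (hc : Continuous h) (hs : Surjective h) :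
    ∃ G : (ℕ → ℕ) → ℕ → S, Continuous G ∧ Surjective G := by
  refine ⟨fun t n => h fun k => t (Nat.pair n k),
    continuous_pi fun n => hc.comp (continuous_pi fun k => continuous_apply _), fun σ => ?_⟩
  choose p hp using fun n => hs (σ n)
  exact ⟨fun k => p (Nat.unpair k).1 (Nat.unpair k).2, funext fun n => by simpa using hp n⟩

theorem stmt_7_general {Ω : Type*} [MeasurableSpace Ω]
    {S : Type*} [TopologicalSpace S]
    [MeasurableSpace S] [BorelSpace S]
    (hS : ∃ (P : Type) (tP : TopologicalSpace P), @PolishSpace P tP ∧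
      ∃ f : P → S, @Continuous P S tP _ f ∧ Function.Surjective f)
    {X : Type*} [TopologicalSpace X] [T1Space X]
    (hX : ∃ 𝒰 : Set (Set X), 𝒰.Countable ∧ (∀ U ∈ 𝒰, IsOpen U) ∧
      ∀ K C : Set X, IsCompact K → IsClosed C → Disjoint K C →
        ∃ U ∈ 𝒰, C ⊆ U ∧ U ∩ K = ∅)
    (F : S → Ω → Set X)
    (hFcp : ∀ s ω, IsCompact (F s ω))
    (hF : ∀ C : Set X, IsClosed C →
      MeasurableSet {p : Ω × S | (F p.2 p.1 ∩ C).Nonempty}) :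
    ∀ C : Set X, IsClosed C → ∀ (μ : Measure Ω), IsFiniteMeasure μ →
      NullMeasurableSet {ω | ((⋂ s, F s ω) ∩ C).Nonempty} μ := by
  intro C hC μ _
  obtain ⟨𝒰, h𝒰c, h𝒰o, h𝒰s⟩ := hX
  have h𝒰 : IsCSeparating 𝒰 := ⟨h𝒰o, h𝒰s⟩
  rcases isEmpty_or_nonempty S with _ | _
  · simp only [iInter_of_empty, univ_inter]
    exact .const _
  obtain ⟨P, tP, hP, f, hfc, hfs⟩ := hS
  have : Nonempty P := hfs.nonempty
  obtain ⟨q, hqc, hqs⟩ := PolishSpace.exists_nat_nat_continuous_surjective P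
  obtain ⟨G, hGc, hGs⟩ := exists_continuous_surjective_nat_nat_seq (hfc.comp hqc) (hfs.comp hqs)
  have hcompl : {ω | ((⋂ s, F s ω) ∩ C).Nonempty}ᶜ =
      Prod.fst '' {p : Ω × (ℕ → ℕ) | (⋂ n, F (G p.2 n) p.1) ∩ C = ∅} := by
    ext ω
    simp [not_nonempty_iff_eq_empty,
      h𝒰.iInter_inter_eq_empty_iff_exists_seq h𝒰c (hFcp · ω), hGs.exists]
  have hmeas : MeasurableSet {p : Ω × (ℕ → ℕ) | (⋂ n, F (G p.2 n) p.1) ∩ C = ∅} :=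
    h𝒰.measurableSet_iInter_inter_eq_empty h𝒰c
      (fun n D hD => (measurable_fst.prodMk
        (((continuous_apply n).comp hGc).measurable.comp measurable_snd)) (hF D hD))
      (fun n p => hFcp _ _) hC
  rw [← compl_compl {ω | ((⋂ s, F s ω) ∩ C).Nonempty}, hcompl]
  exact (hmeas.nullMeasurableSet_image_fst μ).compl

/-- The intersection of a closed-measurable Souslin family of compact-valued
multifunctions into a countably C-separated T1 space is universally
closed-measurable. -/
theorem stmt_7 {Ω : Type*} [MeasurableSpace Ω]
    {S : Type*} [TopologicalSpace S] [TopologicalSpace.MetrizableSpace S]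
    [MeasurableSpace S] [BorelSpace S]
    (hS : ∃ (P : Type) (tP : TopologicalSpace P), @PolishSpace P tP ∧
      ∃ f : P → S, @Continuous P S tP _ f ∧ Function.Surjective f)
    {X : Type*} [TopologicalSpace X] [T1Space X]
    (hX : ∃ 𝒰 : Set (Set X), 𝒰.Countable ∧ (∀ U ∈ 𝒰, IsOpen U) ∧
      ∀ K C : Set X, IsCompact K → IsClosed C → Disjoint K C →
        ∃ U ∈ 𝒰, C ⊆ U ∧ U ∩ K = ∅)
    (F : S → Ω → Set X)
    (hFcp : ∀ s ω, IsCompact (F s ω))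
    (hF : ∀ C : Set X, IsClosed C →
      MeasurableSet {p : Ω × S | (F p.2 p.1 ∩ C).Nonempty}) :
    ∀ C : Set X, IsClosed C → ∀ (μ : Measure Ω), IsFiniteMeasure μ →
      NullMeasurableSet {ω | ((⋂ s, F s ω) ∩ C).Nonempty} μ :=
  stmt_7_general hS hX F hFcp hF
end

section
/- Equip E := ℂ^ℕ with the product σ-algebra of countably many copies of the Borel σ-algebra of ℂ, and define the equivalence relation x ∼ y on E by: there exists N such that xₙ = yₙ for all n ≥ N. Let σ : E → ℂ be a closed-valued open-measurable multifunction and define its tail part σ_∼(x) := ⋂_{y ∼ x} σ(y). Then σ_∼ is universally open-measurable: for every open U ⊆ ℂ and every finite measure μ on E, the set {x | σ_∼(x) ∩ U ≠ ∅} lies in the μ-completion of the product σ-algebra. -/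
/-!
Write `σ_∼(x) = ⋂ N, F N x`, where `F N x` is the intersection of the `σ y` over the `y` that
agree with `x` from index `N` on; this is a decreasing sequence of closed sets. Exhausting `U` by
compact sets `K k`, compactness gives `σ_∼(x) ∩ U ≠ ∅ ↔ ∃ k, ∀ N, F N x ∩ K k ≠ ∅`. Covering
`K k` by finitely many sets of a countable basis writes `{x | F N x ∩ K k = ∅}` as a countable
union of finite intersections of projections of Borel subsets of `E × E`, so it is analytic.
Analytic sets are measurable for the completion of every finite Borel measure: if `f` is
continuous on `ℕ → ℕ`, bounding the coordinates one at a time keeps the outer measure of the image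
above any `r < μ (range f)`, and the closures of these images intersect inside `range f`.
-/

open MeasureTheory Set Filter Topology TopologicalSpace
open scoped ENNReal

namespace MeasureTheory

theorem nullMeasurableSet_of_forall_lt_measure_exists_subset {α : Type*} [MeasurableSpace α]
    {μ : Measure α} {s : Set α} (hs : μ s ≠ ∞)
    (h : ∀ r < μ s, ∃ t ⊆ s, MeasurableSet t ∧ r ≤ μ t) : NullMeasurableSet s μ := by
  obtain ⟨t, hts, htm, hst⟩ : ∃ t ⊆ s, MeasurableSet t ∧ μ s ≤ μ t := by
    rcases eq_or_ne (μ s) 0 with h0 | h0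
    · exact ⟨∅, empty_subset s, .empty, by simp [h0]⟩
    obtain ⟨r, -, hr, hr_lim⟩ := exists_seq_strictMono_tendsto' (pos_iff_ne_zero.2 h0)
    choose t hts htm hrt using fun n => h (r n) (hr n).2
    exact ⟨⋃ n, t n, iUnion_subset hts, .iUnion htm,
      le_of_tendsto' hr_lim fun n => (hrt n).trans (measure_mono (subset_iUnion t n))⟩
  exact htm.nullMeasurableSet.congr
    (ae_eq_of_subset_of_measure_ge hts hst htm.nullMeasurableSet hs)

section BaireSpace

variable {α : Type*}

theorem iInter_closure_image_subset_image_setOf_forall_le [TopologicalSpace α] [T2Space α]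
    [FirstCountableTopology α] {f : (ℕ → ℕ) → α} (hf : Continuous f) (g : ℕ → ℕ) :
    ⋂ n, closure (f '' {x | ∀ i < n, x i ≤ g i}) ⊆ f '' {x | ∀ i, x i ≤ g i} := by
  intro y hy
  obtain ⟨V, hV⟩ := (𝓝 y).exists_antitone_basis
  have : ∀ n, ∃ x : ℕ → ℕ, (∀ i < n, x i ≤ g i) ∧ f x ∈ V n := fun n => by
    obtain ⟨-, hzV, x, hx, rfl⟩ := mem_closure_iff_nhds.1 (mem_iInter.1 hy n) (V n) (hV.mem n)
    exact ⟨x, hx, hzV⟩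
  choose x hxg hxV using this
  have hC : IsCompact {x : ℕ → ℕ | ∀ i, x i ≤ g i} := by
    simpa [Set.pi, Iic] using isCompact_univ_pi fun i => (finite_Iic (g i)).isCompact
  obtain ⟨a, ha, φ, hφ, hlim⟩ :=
    hC.tendsto_subseq (x := fun n i => min (x n i) (g i)) fun n i => min_le_right _ _
  -- truncating `x n` at `g` changes none of its first `n` coordinates
  have hxa : Tendsto (x ∘ φ) atTop (𝓝 a) := by
    refine tendsto_pi_nhds.2 fun i => (tendsto_pi_nhds.1 hlim i).congr' ?_
    filter_upwards [eventually_gt_atTop i] with n hn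
    exact min_eq_left (hxg (φ n) i (hn.trans_le hφ.le_apply))
  exact ⟨a, ha, tendsto_nhds_unique ((hf.tendsto a).comp hxa)
    ((hV.tendsto hxV).comp hφ.tendsto_atTop)⟩

variable [MeasurableSpace α] (μ : Measure α) {r : ℝ≥0∞}

theorem exists_lt_measure_image_inter_setOf_le (f : (ℕ → ℕ) → α) {A : Set (ℕ → ℕ)}
    (hr : r < μ (f '' A)) (n : ℕ) : ∃ k, r < μ (f '' (A ∩ {x | x n ≤ k})) := by
  have hA : A = ⋃ k, A ∩ {x | x n ≤ k} := by
    ext x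
    simp only [mem_iUnion, mem_inter_iff, exists_and_left]
    exact ⟨fun hx => ⟨hx, x n, le_refl (x n)⟩, And.left⟩
  have hmono : Monotone fun k => f '' (A ∩ {x | x n ≤ k}) := fun k l hkl =>
    image_mono (inter_subset_inter_right A fun x hx => le_trans hx hkl)
  -- continuity from below holds for the outer measure of arbitrary sets
  rwa [hA, image_iUnion, hmono.measure_iUnion, lt_iSup_iff] at hr

theorem exists_lt_measure_image_setOf_forall_lt_le (f : (ℕ → ℕ) → α) (hr : r < μ (range f)) :
    ∃ g : ℕ → ℕ, ∀ n, r < μ (f '' {x | ∀ i < n, x i ≤ g i}) := by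
  choose! k hk using fun (A : Set (ℕ → ℕ)) n (hA : r < μ (f '' A)) =>
    exists_lt_measure_image_inter_setOf_le μ f hA n
  let A : ℕ → Set (ℕ → ℕ) := fun n => Nat.rec univ (fun m B => B ∩ {x | x m ≤ k B m}) n
  have hA : ∀ n, A n = {x | ∀ i < n, x i ≤ k (A i) i} := by
    intro n
    induction n with
    | zero => simp [A]
    | succ n ih =>
      ext x
      change x ∈ A n ∩ {x | x n ≤ k (A n) n} ↔ ∀ i < n + 1, x i ≤ k (A i) i
      rw [Nat.forall_lt_succ_right, ih]
      rfl
  refine ⟨fun i => k (A i) i, fun n => ?_⟩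
  rw [← hA]
  induction n with
  | zero => simpa [A] using hr
  | succ n ih => exact hk (A n) n ih

variable [TopologicalSpace α] [T2Space α] [FirstCountableTopology α] [OpensMeasurableSpace α]
  [IsFiniteMeasure μ]

theorem exists_isClosed_subset_range_le_measure {f : (ℕ → ℕ) → α} (hf : Continuous f)
    (hr : r < μ (range f)) : ∃ M, IsClosed M ∧ M ⊆ range f ∧ r ≤ μ M := by
  obtain ⟨g, hg⟩ := exists_lt_measure_image_setOf_forall_lt_le μ f hr
  refine ⟨_, isClosed_iInter fun _ => isClosed_closure,
    (iInter_closure_image_subset_image_setOf_forall_le hf g).trans (image_subset_range _ _), ?_⟩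
  have hanti : Antitone fun n => closure (f '' {x | ∀ i < n, x i ≤ g i}) := fun m n hmn =>
    closure_mono (image_mono fun x hx i hi => hx i (hi.trans_le hmn))
  rw [hanti.measure_iInter (fun _ => isClosed_closure.nullMeasurableSet) ⟨0, measure_ne_top _ _⟩]
  exact le_iInf fun n => (hg n).le.trans (measure_mono subset_closure)

theorem AnalyticSet.nullMeasurableSet_s16 {s : Set α} (hs : AnalyticSet s) :
    NullMeasurableSet s μ := by
  rw [AnalyticSet] at hs
  rcases hs with rfl | ⟨f, hf, rfl⟩
  · exact nullMeasurableSet_empty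
  refine nullMeasurableSet_of_forall_lt_measure_exists_subset (measure_ne_top μ _) fun r hr => ?_
  obtain ⟨M, hMc, hMs, hrM⟩ := exists_isClosed_subset_range_le_measure μ hf hr
  exact ⟨M, hMs, hMc.measurableSet, hrM⟩

end BaireSpace

section Analytic

variable {α ι : Type*} [TopologicalSpace α]

theorem AnalyticSet.biUnion {s : Set ι} (hs : s.Countable) {t : ι → Set α}
    (ht : ∀ i ∈ s, AnalyticSet (t i)) : AnalyticSet (⋃ i ∈ s, t i) := by
  have := hs.to_subtype
  rw [biUnion_eq_iUnion]
  exact .iUnion fun i => ht i i.2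

theorem AnalyticSet.biInter [PolishSpace α] {s : Set ι} (hs : s.Countable) {t : ι → Set α}
    (ht : ∀ i ∈ s, AnalyticSet (t i)) : AnalyticSet (⋂ i ∈ s, t i) := by
  rcases s.eq_empty_or_nonempty with rfl | hne
  · simpa using isClosed_univ.analyticSet
  have := hs.to_subtype
  have := hne.to_subtype
  rw [biInter_eq_iInter]
  exact .iInter fun i => ht i i.2

theorem analyticSet_setOf_exists_rel [PolishSpace α] [MeasurableSpace α] [BorelSpace α]
    {R : α → α → Prop} (hR : MeasurableSet {p : α × α | R p.1 p.2}) {P : Set α}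
    (hP : MeasurableSet P) : AnalyticSet {x | ∃ y, R x y ∧ y ∈ P} := by
  have : {x | ∃ y, R x y ∧ y ∈ P} = Prod.fst '' ({p : α × α | R p.1 p.2} ∩ Prod.snd ⁻¹' P) := by
    ext x
    simp
  rw [this]
  exact (hR.inter (measurable_snd hP)).analyticSet_image measurable_fst

end Analytic

end MeasureTheory

section

variable {Z ι : Type*} [TopologicalSpace Z]

theorem IsOpen.isSigmaCompact [LocallyCompactSpace Z] [SecondCountableTopology Z] {U : Set Z}
    (hU : IsOpen U) : IsSigmaCompact U := by
  have := hU.locallyCompactSpace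
  simpa using (isSigmaCompact_univ (X := U)).image continuous_subtype_val

theorem iInter_inter_nonempty_iff_of_antitone {F : ℕ → Set Z} (hF : Antitone F)
    (hFc : ∀ N, IsClosed (F N)) {K : Set Z} (hK : IsCompact K) :
    ((⋂ N, F N) ∩ K).Nonempty ↔ ∀ N, (F N ∩ K).Nonempty := by
  refine ⟨fun ⟨w, hw, hwK⟩ N => ⟨w, mem_iInter.1 hw N, hwK⟩, fun h => ?_⟩
  rw [inter_comm]
  refine hK.inter_iInter_nonempty F hFc fun u => ?_
  obtain ⟨w, hwF, hwK⟩ := h (u.sup id)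
  exact ⟨w, hwK, mem_iInter₂.2 fun N hN => hF (Finset.le_sup (f := id) hN) hwF⟩

theorem TopologicalSpace.IsTopologicalBasis.biInter_inter_eq_empty_iff {B : Set (Set Z)}
    (hB : IsTopologicalBasis B) {C : ι → Set Z} {s : Set ι} (hC : ∀ i ∈ s, IsClosed (C i))
    {K : Set Z} (hK : IsCompact K) :
    (⋂ i ∈ s, C i) ∩ K = ∅ ↔
      ∃ 𝒮 ⊆ B, 𝒮.Finite ∧ K ⊆ ⋃₀ 𝒮 ∧ ∀ V ∈ 𝒮, ∃ i ∈ s, Disjoint (C i) V := by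
  constructor
  · intro h
    have hcov : K ⊆ ⋃ V ∈ {V ∈ B | ∃ i ∈ s, Disjoint (C i) V}, V := by
      intro w hwK
      have hw : w ∉ ⋂ i ∈ s, C i := fun hw => (h ▸ ⟨hw, hwK⟩ : w ∈ (∅ : Set Z))
      simp only [mem_iInter₂, not_forall] at hw
      obtain ⟨i, hi, hwi⟩ := hw
      obtain ⟨V, hVB, hwV, hV⟩ := hB.exists_subset_of_mem_open hwi (hC i hi).isOpen_compl
      exact mem_biUnion ⟨hVB, i, hi, subset_compl_iff_disjoint_left.1 hV⟩ hwV
    obtain ⟨𝒮, h𝒮, hfin, hK𝒮⟩ := hK.elim_finite_subcover_image (fun V hV => hB.isOpen hV.1) hcov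
    exact ⟨𝒮, fun V hV => (h𝒮 hV).1, hfin, by rwa [sUnion_eq_biUnion], fun V hV => (h𝒮 hV).2⟩
  · rintro ⟨𝒮, -, -, hK𝒮, hdisj⟩
    refine eq_empty_of_forall_notMem fun w ⟨hwC, hwK⟩ => ?_
    obtain ⟨V, hV𝒮, hwV⟩ := hK𝒮 hwK
    obtain ⟨i, hi, hiV⟩ := hdisj V hV𝒮
    exact hiV.notMem_of_mem_left (mem_iInter₂.1 hwC i hi) hwV

end

section TailPart

variable {X Z : Type*} [TopologicalSpace X] [PolishSpace X] [MeasurableSpace X] [BorelSpace X]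
  [TopologicalSpace Z] [SecondCountableTopology Z] {σ : X → Set Z}

theorem analyticSet_setOf_biInter_inter_eq_empty {R : X → X → Prop}
    (hR : MeasurableSet {p : X × X | R p.1 p.2}) (hσcl : ∀ y, IsClosed (σ y))
    (hσ : ∀ V, IsOpen V → MeasurableSet {y | (σ y ∩ V).Nonempty}) {K : Set Z}
    (hK : IsCompact K) : AnalyticSet {x | (⋂ y ∈ {y | R x y}, σ y) ∩ K = ∅} := by
  have hQ : ∀ V, IsOpen V → AnalyticSet {x | ∃ y, R x y ∧ y ∈ {y | Disjoint (σ y) V}} := by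
    intro V hV
    refine analyticSet_setOf_exists_rel hR ?_
    have : {y | Disjoint (σ y) V} = {y | (σ y ∩ V).Nonempty}ᶜ := by
      ext y
      simp [not_nonempty_iff_eq_empty, disjoint_iff_inter_eq_empty]
    exact this ▸ (hσ V hV).compl
  have : {x | (⋂ y ∈ {y | R x y}, σ y) ∩ K = ∅} =
      ⋃ 𝒮 ∈ {𝒮 | 𝒮 ⊆ countableBasis Z ∧ 𝒮.Finite ∧ K ⊆ ⋃₀ 𝒮},
        ⋂ V ∈ 𝒮, {x | ∃ y, R x y ∧ y ∈ {y | Disjoint (σ y) V}} := by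
    ext x
    rw [mem_ofPred, (isBasis_countableBasis Z).biInter_inter_eq_empty_iff (fun y _ => hσcl y) hK]
    simp [and_assoc]
  rw [this]
  have h𝒞 : {𝒮 | 𝒮 ⊆ countableBasis Z ∧ 𝒮.Finite ∧ K ⊆ ⋃₀ 𝒮}.Countable :=
    (countable_ofPred_finite_subset (countable_countableBasis Z)).mono
      fun 𝒮 h => show 𝒮.Finite ∧ _ from ⟨h.2.1, h.1⟩
  exact .biUnion h𝒞 fun 𝒮 h => .biInter h.2.1.countable fun V hV =>
    hQ V (isOpen_of_mem_countableBasis (h.1 hV))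

theorem nullMeasurableSet_setOf_biInter_inter_nonempty {R : X → X → Prop}
    (hR : MeasurableSet {p : X × X | R p.1 p.2}) (hσcl : ∀ y, IsClosed (σ y))
    (hσ : ∀ V, IsOpen V → MeasurableSet {y | (σ y ∩ V).Nonempty}) {K : Set Z}
    (hK : IsCompact K) (μ : Measure X) [IsFiniteMeasure μ] :
    NullMeasurableSet {x | ((⋂ y ∈ {y | R x y}, σ y) ∩ K).Nonempty} μ := by
  simpa only [compl_ofPred, ← nonempty_iff_ne_empty] using
    ((analyticSet_setOf_biInter_inter_eq_empty hR hσcl hσ hK).nullMeasurableSet_s16 μ).compl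

theorem nullMeasurableSet_setOf_biInter_exists_inter_nonempty [LocallyCompactSpace Z]
    {R : ℕ → X → X → Prop} (hR : ∀ N, MeasurableSet {p : X × X | R N p.1 p.2})
    (hR_mono : ∀ x y, Monotone fun N => R N x y) (hσcl : ∀ y, IsClosed (σ y))
    (hσ : ∀ V, IsOpen V → MeasurableSet {y | (σ y ∩ V).Nonempty}) {U : Set Z} (hU : IsOpen U)
    (μ : Measure X) [IsFiniteMeasure μ] :
    NullMeasurableSet {x | ((⋂ y ∈ {y | ∃ N, R N x y}, σ y) ∩ U).Nonempty} μ := by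
  obtain ⟨K, hK, rfl⟩ := hU.isSigmaCompact
  have : {x | ((⋂ y ∈ {y | ∃ N, R N x y}, σ y) ∩ ⋃ k, K k).Nonempty} =
      ⋃ k, ⋂ N, {x | ((⋂ y ∈ {y | R N x y}, σ y) ∩ K k).Nonempty} := by
    ext x
    have hanti : Antitone fun N => ⋂ y ∈ {y | R N x y}, σ y := fun M N hMN =>
      biInter_subset_biInter_left fun y hy => hR_mono x y hMN hy
    rw [mem_ofPred, ofPred_exists, biInter_iUnion, inter_iUnion, nonempty_iUnion, mem_iUnion]
    simp only [mem_iInter, mem_ofPred]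
    exact exists_congr fun k => iInter_inter_nonempty_iff_of_antitone hanti
      (fun N => isClosed_biInter fun y _ => hσcl y) (hK k)
  rw [this]
  exact .iUnion fun k => .iInter fun N =>
    nullMeasurableSet_setOf_biInter_inter_nonempty (hR N) hσcl hσ (hK k) μ

end TailPart

/-- The tail part of a closed-valued open-measurable multifunction on `ℂ^ℕ` is
universally open-measurable. -/
theorem stmt_16 (σ : (ℕ → ℂ) → Set ℂ)
    (hσcl : ∀ x, IsClosed (σ x))
    (hσ : ∀ U : Set ℂ, IsOpen U → MeasurableSet {x : ℕ → ℂ | (σ x ∩ U).Nonempty}) :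
    ∀ U : Set ℂ, IsOpen U → ∀ (μ : Measure (ℕ → ℂ)), IsFiniteMeasure μ →
      NullMeasurableSet
        {x : ℕ → ℂ |
          ((⋂ y ∈ {y : ℕ → ℂ | ∃ N, ∀ n ≥ N, y n = x n}, σ y) ∩ U).Nonempty} μ := by
  intro U hU μ _
  have hR : ∀ N, MeasurableSet {p : (ℕ → ℂ) × (ℕ → ℂ) | ∀ n ≥ N, p.2 n = p.1 n} := fun N => by
    simp only [ofPred_forall]
    exact .iInter fun n => .iInter fun _ =>
      measurableSet_eq_fun measurable_snd.eval measurable_fst.eval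
  exact nullMeasurableSet_setOf_biInter_exists_inter_nonempty hR
    (fun x y M N hMN hy n hn => hy n (hMN.trans hn)) hσcl hσ hU μ
end
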